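/- Let T be an associative trialgebra over a field K of characteristic zero. Then the set of central derivations of T equals the intersection of the centroid with the derivation algebra: C(T) = Γ(T) ∩ Der(T). -/

import Mathlib

/-!
The identity holds one product at a time. If ψ lies in the centroid and is a derivation, then
`ψ (x ⋆ y) = ψ x ⋆ y + x ⋆ ψ y` for each product `⋆`, while `ψ (x ⋆ y)` also equals each summand
alone, so both summands vanish: `ψ x` is central and `ψ` kills all products. Conversely, a central
derivation makes every term in the centroid and Leibniz identities zero.
-/

variable {K T : Type*} [Field K] [CharZero K] [AddCommGroup T] [Module K T]

/-- An associative trialgebra structure: three bilinear products `l` (⊣), `r` (⊢), `m` (⊥)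
satisfying the eleven trialgebra axioms. -/
structure IsTrialgebra (l r m : T →ₗ[K] T →ₗ[K] T) : Prop where
  ax1 : ∀ x y z : T, l (l x y) z = l x (l y z)
  ax2 : ∀ x y z : T, l (l x y) z = l x (r y z)
  ax3 : ∀ x y z : T, l (r x y) z = r x (l y z)
  ax4 : ∀ x y z : T, r (l x y) z = r x (r y z)
  ax5 : ∀ x y z : T, r (r x y) z = r x (r y z)
  ax6 : ∀ x y z : T, l (l x y) z = l x (m y z)
  ax7 : ∀ x y z : T, l (m x y) z = m x (l y z)
  ax8 : ∀ x y z : T, m (l x y) z = m x (r y z)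
  ax9 : ∀ x y z : T, m (r x y) z = r x (m y z)
  ax10 : ∀ x y z : T, r (m x y) z = r x (r y z)
  ax11 : ∀ x y z : T, m (m x y) z = m x (m y z)

/-- A derivation of the trialgebra: the Leibniz rule holds for each of the three products. -/
def IsDeriv (l r m : T →ₗ[K] T →ₗ[K] T) (d : T →ₗ[K] T) : Prop :=
  ∀ x y : T,
    d (l x y) = l (d x) y + l x (d y) ∧
    d (r x y) = r (d x) y + r x (d y) ∧
    d (m x y) = m (d x) y + m x (d y)

/-- An element of the centroid of the trialgebra. -/
def IsCentroidElem (l r m : T →ₗ[K] T →ₗ[K] T) (ψ : T →ₗ[K] T) : Prop :=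
  ∀ x y : T,
    (ψ (l x y) = l (ψ x) y ∧ ψ (l x y) = l x (ψ y)) ∧
    (ψ (r x y) = r (ψ x) y ∧ ψ (r x y) = r x (ψ y)) ∧
    (ψ (m x y) = m (ψ x) y ∧ ψ (m x y) = m x (ψ y))

/-- Membership in the center Z(T) of the trialgebra. -/
def InCenter (l r m : T →ₗ[K] T →ₗ[K] T) (x : T) : Prop :=
  ∀ y : T, (l x y = 0 ∧ l y x = 0) ∧ (r x y = 0 ∧ r y x = 0) ∧ (m x y = 0 ∧ m y x = 0)

/-- A central derivation: a linear map with image in the center which kills all products. -/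
def IsCentralDeriv (l r m : T →ₗ[K] T →ₗ[K] T) (ψ : T →ₗ[K] T) : Prop :=
  (∀ x : T, InCenter l r m (ψ x)) ∧
  ∀ x y : T, ψ (l x y) = 0 ∧ ψ (r x y) = 0 ∧ ψ (m x y) = 0

section SingleProduct

variable {R M : Type*} [CommRing R] [AddCommGroup M] [Module R M]

def IsDerivOf (p : M →ₗ[R] M →ₗ[R] M) (d : M →ₗ[R] M) : Prop :=
  ∀ x y : M, d (p x y) = p (d x) y + p x (d y)

def IsCentroidOf (p : M →ₗ[R] M →ₗ[R] M) (ψ : M →ₗ[R] M) : Prop :=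
  ∀ x y : M, ψ (p x y) = p (ψ x) y ∧ ψ (p x y) = p x (ψ y)

def IsCentralDerivOf (p : M →ₗ[R] M →ₗ[R] M) (ψ : M →ₗ[R] M) : Prop :=
  ∀ x y : M, (p (ψ x) y = 0 ∧ p y (ψ x) = 0) ∧ ψ (p x y) = 0

theorem isCentralDerivOf_iff {p : M →ₗ[R] M →ₗ[R] M} {ψ : M →ₗ[R] M} :
    IsCentralDerivOf p ψ ↔ IsCentroidOf p ψ ∧ IsDerivOf p ψ := by
  constructor
  · intro h
    refine ⟨fun x y ↦ ⟨?_, ?_⟩, fun x y ↦ ?_⟩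
    · rw [(h x y).2, (h x y).1.1]
    · rw [(h x y).2, (h y x).1.2]
    · rw [(h x y).2, (h x y).1.1, (h y x).1.2, add_zero]
  · rintro ⟨hΓ, hD⟩
    have left_zero (x y : M) : p (ψ x) y = 0 :=
      add_eq_right.mp ((hD x y).symm.trans (hΓ x y).2)
    have right_zero (x y : M) : p x (ψ y) = 0 :=
      add_eq_left.mp ((hD x y).symm.trans (hΓ x y).1)
    exact fun x y ↦ ⟨⟨left_zero x y, right_zero y x⟩, (hΓ x y).1.trans (left_zero x y)⟩

end SingleProduct

section ThreeProducts

variable {F V : Type*} [Field F] [AddCommGroup V] [Module F V] {l r m : V →ₗ[F] V →ₗ[F] V}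
  {ψ : V →ₗ[F] V}

theorem isCentroidElem_iff :
    IsCentroidElem l r m ψ ↔ IsCentroidOf l ψ ∧ IsCentroidOf r ψ ∧ IsCentroidOf m ψ := by
  simp only [IsCentroidElem, IsCentroidOf, forall_and]

theorem isDeriv_iff : IsDeriv l r m ψ ↔ IsDerivOf l ψ ∧ IsDerivOf r ψ ∧ IsDerivOf m ψ := by
  simp only [IsDeriv, IsDerivOf, forall_and]

theorem isCentralDeriv_iff :
    IsCentralDeriv l r m ψ ↔
      IsCentralDerivOf l ψ ∧ IsCentralDerivOf r ψ ∧ IsCentralDerivOf m ψ := by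
  simp only [IsCentralDeriv, InCenter, IsCentralDerivOf, forall_and]
  tauto

end ThreeProducts

theorem statement7_general (l r m : T →ₗ[K] T →ₗ[K] T) :
    {ψ : T →ₗ[K] T | IsCentralDeriv l r m ψ} =
      {ψ : T →ₗ[K] T | IsCentroidElem l r m ψ} ∩ {ψ : T →ₗ[K] T | IsDeriv l r m ψ} := by
  ext ψ
  simp only [Set.mem_ofPred_eq, Set.mem_inter_iff, isCentralDeriv_iff, isCentroidElem_iff,
    isDeriv_iff, isCentralDerivOf_iff]
  tauto

/-- The set of central derivations of an associative trialgebra equals the intersection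
of the centroid with the set of derivations: C(T) = Γ(T) ∩ Der(T). -/
theorem statement7 (l r m : T →ₗ[K] T →ₗ[K] T) (h : IsTrialgebra l r m) :
    {ψ : T →ₗ[K] T | IsCentralDeriv l r m ψ} =
      {ψ : T →ₗ[K] T | IsCentroidElem l r m ψ} ∩ {ψ : T →ₗ[K] T | IsDeriv l r m ψ} :=
  statement7_general l r m
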